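/- For matroids M₁ on E₁ and M₂ on E₂ with E₁ ∩ E₂ = ∅, the CI-structure of the direct sum satisfies [[M₁ ⊕ M₂]] = [[M₁]] ⊕ [[M₂]], where G₁ ⊕ G₂ consists of all (ij|K) ∈ A_{E₁∪E₂} such that either i ∈ E₁ and j ∈ E₂ (or vice versa), or {i,j} ⊆ E₁ and (ij|K ∩ E₁) ∈ G₁, or {i,j} ⊆ E₂ and (ij|K ∩ E₂) ∈ G₂. -/

import Mathlib

open Finset

/-- A matroid on a finite ground set `E`, given by its rank function. -/
structure FinMatroid (α : Type*) [DecidableEq α] where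
  E : Finset α
  r : Finset α → ℕ
  r_empty : r ∅ = 0
  r_le_card : ∀ ⦃A⦄, A ⊆ E → r A ≤ A.card
  r_mono : ∀ ⦃A B : Finset α⦄, A ⊆ B → B ⊆ E → r A ≤ r B
  r_submod : ∀ ⦃A B : Finset α⦄, A ⊆ E → B ⊆ E → r (A ∪ B) + r (A ∩ B) ≤ r A + r B

namespace FinMatroid

variable {α : Type*} [DecidableEq α]

/-- A set is independent if it is subcardinal-tight for the rank function. -/
def Indep (M : FinMatroid α) (S : Finset α) : Prop := S ⊆ M.E ∧ M.r S = S.card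

/-- A circuit is a minimal dependent set. -/
def Circuit (M : FinMatroid α) (C : Finset α) : Prop :=
  C ⊆ M.E ∧ M.r C < C.card ∧ ∀ S, S ⊂ C → M.r S = S.card

/-- `B` is a basis of `S` if it is a maximal independent subset of `S`. -/
def BasisOf (M : FinMatroid α) (B S : Finset α) : Prop :=
  B ⊆ S ∧ M.Indep B ∧ ∀ x ∈ S, x ∉ B → ¬ M.Indep (insert x B)

/-- The conditional independence statement `(ij|K)` holds in `M`:
`r(iK) + r(jK) = r(ijK) + r(K)`. -/
def CI (M : FinMatroid α) (i j : α) (K : Finset α) : Prop :=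
  M.r (insert i K) + M.r (insert j K) = M.r (insert i (insert j K)) + M.r K

/-- A matroid is loopless if every singleton of the ground set is independent. -/
def Loopless (M : FinMatroid α) : Prop := ∀ e ∈ M.E, M.r {e} = 1

end FinMatroid

/-- Well-formedness of a CI-statement `(ij|K)` on ground set `E`. -/
def wfCI {α : Type*} [DecidableEq α] (E : Finset α) (i j : α) (K : Finset α) : Prop :=
  i ∈ E ∧ j ∈ E ∧ i ≠ j ∧ i ∉ K ∧ j ∉ K ∧ K ⊆ E

/-- The CI-structure `[[M]]` of a matroid, as a predicate on CI-statements. -/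
def FinMatroid.ciOf {α : Type*} [DecidableEq α] (M : FinMatroid α) :
    α → α → Finset α → Prop :=
  fun i j K => wfCI M.E i j K ∧ M.CI i j K

/-- Direct sum of two matroids on disjoint ground sets, with rank function
`S ↦ r₁(S ∩ E₁) + r₂(S ∩ E₂)`. -/
def FinMatroid.directSum {α : Type*} [DecidableEq α] (M₁ M₂ : FinMatroid α)
    (h : Disjoint M₁.E M₂.E) : FinMatroid α where
  E := M₁.E ∪ M₂.E
  r S := M₁.r (S ∩ M₁.E) + M₂.r (S ∩ M₂.E)
  r_empty := by simp [M₁.r_empty, M₂.r_empty]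
  r_le_card := by
    intro S hS
    try dsimp only
    have h1 : M₁.r (S ∩ M₁.E) ≤ (S ∩ M₁.E).card := M₁.r_le_card inter_subset_right
    have h2 : M₂.r (S ∩ M₂.E) ≤ (S ∩ M₂.E).card := M₂.r_le_card inter_subset_right
    have hd : Disjoint (S ∩ M₁.E) (S ∩ M₂.E) :=
      h.mono inter_subset_right inter_subset_right
    have h3 : (S ∩ M₁.E) ∪ (S ∩ M₂.E) = S := by
      ext x
      simp only [mem_union, mem_inter]
      have hx : x ∈ S → x ∈ M₁.E ∪ M₂.E := fun hxS => hS hxS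
      simp only [mem_union] at hx
      tauto
    have h4 := card_union_of_disjoint hd
    rw [h3] at h4
    omega
  r_mono := by
    intro S T hST hT
    try dsimp only
    exact Nat.add_le_add
      (M₁.r_mono (inter_subset_inter hST (Finset.Subset.refl _)) inter_subset_right)
      (M₂.r_mono (inter_subset_inter hST (Finset.Subset.refl _)) inter_subset_right)
  r_submod := by
    intro S T hS hT
    try dsimp only
    have k1 : (S ∪ T) ∩ M₁.E = (S ∩ M₁.E) ∪ (T ∩ M₁.E) := by
      ext x; simp only [mem_union, mem_inter]; tauto
    have k2 : (S ∩ T) ∩ M₁.E = (S ∩ M₁.E) ∩ (T ∩ M₁.E) := by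
      ext x; simp only [mem_inter]; tauto
    have k3 : (S ∪ T) ∩ M₂.E = (S ∩ M₂.E) ∪ (T ∩ M₂.E) := by
      ext x; simp only [mem_union, mem_inter]; tauto
    have k4 : (S ∩ T) ∩ M₂.E = (S ∩ M₂.E) ∩ (T ∩ M₂.E) := by
      ext x; simp only [mem_inter]; tauto
    have h1 := M₁.r_submod (A := S ∩ M₁.E) (B := T ∩ M₁.E)
      inter_subset_right inter_subset_right
    have h2 := M₂.r_submod (A := S ∩ M₂.E) (B := T ∩ M₂.E)
      inter_subset_right inter_subset_right
    rw [k1, k2, k3, k4]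
    omega

theorem wfCI.inter {α : Type*} [DecidableEq α] {E F : Finset α} {i j : α} {K : Finset α}
    (hw : wfCI E i j K) (hi : i ∈ F) (hj : j ∈ F) : wfCI F i j (K ∩ F) :=
  ⟨hi, hj, hw.2.2.1, fun h => hw.2.2.2.1 (mem_inter.1 h).1,
    fun h => hw.2.2.2.2.1 (mem_inter.1 h).1, inter_subset_right⟩

namespace FinMatroid

variable {α : Type*} [DecidableEq α] {i j : α} {K : Finset α}

theorem CI_comm {M : FinMatroid α} : M.CI i j K ↔ M.CI j i K := by
  rw [CI, CI, insert_comm, add_comm (M.r (insert i K))]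

theorem ciOf_inter_iff {M : FinMatroid α} {E : Finset α} (hw : wfCI E i j K)
    (hi : i ∈ M.E) (hj : j ∈ M.E) : M.ciOf i j (K ∩ M.E) ↔ M.CI i j (K ∩ M.E) :=
  and_iff_right (hw.inter hi hj)

section DirectSum

variable (M₁ M₂ : FinMatroid α) (h : Disjoint M₁.E M₂.E)

theorem directSum_r (S : Finset α) :
    (M₁.directSum M₂ h).r S = M₁.r (S ∩ M₁.E) + M₂.r (S ∩ M₂.E) :=
  rfl

theorem directSum_CI_comm :
    (M₁.directSum M₂ h).CI i j K ↔ (M₂.directSum M₁ h.symm).CI i j K := by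
  simp only [CI, directSum_r]
  omega

theorem directSum_CI_iff_of_mem_left (hi : i ∈ M₁.E) (hj : j ∈ M₁.E) :
    (M₁.directSum M₂ h).CI i j K ↔ M₁.CI i j (K ∩ M₁.E) := by
  simp only [CI, directSum_r, insert_inter_of_mem hi, insert_inter_of_mem hj,
    insert_inter_of_notMem (disjoint_left.1 h hi), insert_inter_of_notMem (disjoint_left.1 h hj)]
  omega

/-- The rank defect `r(iK) + r(jK) - r(ijK) - r(K)` of the direct sum is a sum of one defect
per summand, and each of those involves only one of `i`, `j`, hence vanishes. -/
theorem directSum_CI_of_mem_left_of_mem_right (hi : i ∈ M₁.E) (hj : j ∈ M₂.E) :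
    (M₁.directSum M₂ h).CI i j K := by
  simp only [CI, directSum_r, insert_inter_of_mem hi, insert_inter_of_mem hj,
    insert_inter_of_notMem (disjoint_left.1 h hi), insert_inter_of_notMem (disjoint_right.1 h hj)]
  omega

theorem directSum_CI_iff (hw : wfCI (M₁.E ∪ M₂.E) i j K) :
    (M₁.directSum M₂ h).CI i j K ↔
      (i ∈ M₁.E ∧ j ∈ M₂.E) ∨ (i ∈ M₂.E ∧ j ∈ M₁.E) ∨
        (i ∈ M₁.E ∧ j ∈ M₁.E ∧ M₁.ciOf i j (K ∩ M₁.E)) ∨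
        (i ∈ M₂.E ∧ j ∈ M₂.E ∧ M₂.ciOf i j (K ∩ M₂.E)) := by
  rcases mem_union.1 hw.1 with hi | hi <;> rcases mem_union.1 hw.2.1 with hj | hj
  · rw [directSum_CI_iff_of_mem_left M₁ M₂ h hi hj, ciOf_inter_iff hw hi hj]
    simp [hi, hj, disjoint_left.1 h hi, disjoint_left.1 h hj]
  · exact iff_of_true (directSum_CI_of_mem_left_of_mem_right M₁ M₂ h hi hj) (Or.inl ⟨hi, hj⟩)
  · exact iff_of_true (CI_comm.1 (directSum_CI_of_mem_left_of_mem_right M₁ M₂ h hj hi))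
      (Or.inr (Or.inl ⟨hi, hj⟩))
  · rw [directSum_CI_comm, directSum_CI_iff_of_mem_left M₂ M₁ h.symm hi hj,
      ciOf_inter_iff hw hi hj]
    simp [hi, hj, disjoint_right.1 h hi, disjoint_right.1 h hj]

end DirectSum

end FinMatroid

/-- `[[M₁ ⊕ M₂]] = [[M₁]] ⊕ [[M₂]]`: a CI-statement `(ij|K)`
belongs to the CI-structure of the direct sum iff it is well-formed on
`E₁ ∪ E₂` and either `i, j` lie in different summands, or both lie in `E₁`
and `(ij|K ∩ E₁) ∈ [[M₁]]`, or both lie in `E₂` and `(ij|K ∩ E₂) ∈ [[M₂]]`. -/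
theorem ci_directSum {α : Type*} [DecidableEq α] (M₁ M₂ : FinMatroid α)
    (h : Disjoint M₁.E M₂.E) :
    ∀ (i j : α) (K : Finset α),
      (M₁.directSum M₂ h).ciOf i j K ↔
        (wfCI (M₁.E ∪ M₂.E) i j K ∧
          ((i ∈ M₁.E ∧ j ∈ M₂.E) ∨ (i ∈ M₂.E ∧ j ∈ M₁.E) ∨
            (i ∈ M₁.E ∧ j ∈ M₁.E ∧ M₁.ciOf i j (K ∩ M₁.E)) ∨
            (i ∈ M₂.E ∧ j ∈ M₂.E ∧ M₂.ciOf i j (K ∩ M₂.E)))) :=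
  fun _ _ _ => and_congr_right (FinMatroid.directSum_CI_iff M₁ M₂ h)
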